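/- arXiv:1405.0023 — 2 statements merged into one kernel-verified Lean document; each statement's English description precedes it below -/
import Mathlib

section
/- Let Ψ_x ∈ Q(n,m) be positive semidefinite on the unit circle. Then the set of coefficient tuples (P_0, P_1, …, P_m) ∈ (Matrix (Fin n) (Fin n) ℝ)^{m+1} with P_0 symmetric, such that the associated pseudo-polynomial Ψ(θ) = P_0 + ∑_{k=1}^{m} (e^{-ikθ} • P_k + e^{ikθ} • P_kᵀ) satisfies, for every θ ∈ ℝ: Ψ(θ) positive semidefinite, Ψ_x(θ) − Ψ(θ) positive semidefinite, and Ψ_x(θ) − Ψ(θ) diagonal, is a compact subset of (Matrix (Fin n) (Fin n) ℝ)^{m+1}. -/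
open Matrix Complex Real
open scoped ComplexOrder

/-- The matrix pseudo-polynomial `θ ↦ Q₀ + ∑_{k=1}^m (e^{-ikθ} • Q_k + e^{ikθ} • Q_kᵀ)`
with real coefficient matrices `Q 0, …, Q m`. -/
noncomputable def psiOf (n m : ℕ) (Q : Fin (m + 1) → Matrix (Fin n) (Fin n) ℝ) :
    ℝ → Matrix (Fin n) (Fin n) ℂ := fun θ =>
  (Q 0).map (Complex.ofReal) +
    ∑ k : Fin m,
      (Complex.exp (-(Complex.I * ((k.1 : ℂ) + 1) * (θ : ℂ))) •
          (Q k.succ).map Complex.ofReal +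
        Complex.exp (Complex.I * ((k.1 : ℂ) + 1) * (θ : ℂ)) •
          ((Q k.succ)ᵀ).map Complex.ofReal)

/-- Membership in the class `Q(n,m)` of matrix pseudo-polynomials with real
coefficients and symmetric constant coefficient. -/
def memQ (n m : ℕ) (Ψ : ℝ → Matrix (Fin n) (Fin n) ℂ) : Prop :=
  ∃ Q : Fin (m + 1) → Matrix (Fin n) (Fin n) ℝ,
    (Q 0).IsSymm ∧ ∀ θ : ℝ, Ψ θ = psiOf n m Q θ

/-- The normalized trace integral `T(Ψ) = (1/2π) ∫_{-π}^{π} Re tr Ψ(θ) dθ`. -/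
noncomputable def traceInt (n : ℕ) (Ψ : ℝ → Matrix (Fin n) (Fin n) ℂ) : ℝ :=
  (1 / (2 * Real.pi)) * ∫ θ in (-Real.pi)..Real.pi, (Matrix.trace (Ψ θ)).re

/-!
A feasible `Ψ` satisfies `0 ⪯ Ψ(θ) ⪯ Ψ_x(θ)`, so the diagonal of `Ψ(θ)` is bounded by that of
`Ψ_x(θ)`, which is bounded in `θ`; positive semidefiniteness (`|Ψᵢⱼ|² ≤ Ψᵢᵢ Ψⱼⱼ`) then bounds
every entry of `Ψ(θ)` uniformly in `θ`. Each coefficient is recovered from the values of `Ψ` at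
the `N > 2m` points `2πt/N` by a discrete Fourier transform, so the coefficients are bounded
too. The feasible set is cut out by closed conditions, hence is a closed subset of a box.
-/

namespace Matrix

variable {𝕜 : Type*} [RCLike 𝕜] {n : Type*}

theorem isClosed_setOf_posSemidef [Fintype n] : IsClosed {A : Matrix n n 𝕜 | A.PosSemidef} := by
  simp_rw [posSemidef_iff_dotProduct_mulVec, Set.ofPred_and, Set.ofPred_forall]
  refine (isClosed_eq continuous_id.matrix_conjTranspose continuous_id).inter
    (isClosed_iInter fun x => isClosed_le continuous_const ?_)
  exact continuous_const.dotProduct (continuous_id.matrix_mulVec continuous_const)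

theorem isClosed_setOf_isDiag {α : Type*} [Zero α] [TopologicalSpace α] [T2Space α] :
    IsClosed {A : Matrix n n α | A.IsDiag} := by
  simp_rw [IsDiag, Pairwise, Set.ofPred_forall]
  exact isClosed_iInter fun i => isClosed_iInter fun j => isClosed_iInter fun _ =>
    isClosed_eq (continuous_id.matrix_elem i j) continuous_const

theorem re_apply_le_of_posSemidef_sub {A B : Matrix n n 𝕜} (h : (B - A).PosSemidef) (i : n) :
    RCLike.re (A i i) ≤ RCLike.re (B i i) := by
  simpa using (RCLike.nonneg_iff.mp h.diag_nonneg).1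

theorem PosSemidef.norm_sq_apply_le {A : Matrix n n 𝕜} (hA : A.PosSemidef) (i j : n) :
    ‖A i j‖ ^ 2 ≤ RCLike.re (A i i) * RCLike.re (A j j) := by
  have hdet := (hA.submatrix ![i, j]).det_nonneg
  rw [det_fin_two] at hdet
  simp only [submatrix_apply, cons_val_zero, cons_val_one] at hdet
  rw [← hA.isHermitian.apply j i, RCLike.star_def, RCLike.mul_conj] at hdet
  have hre := (RCLike.nonneg_iff.mp hdet).1
  have him : ∀ k, RCLike.im (A k k) = 0 := fun k => (RCLike.nonneg_iff.mp hA.diag_nonneg).2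
  simp only [map_sub, RCLike.mul_re, him, mul_zero, sub_zero] at hre
  norm_cast at hre
  exact sub_nonneg.mp hre

theorem PosSemidef.norm_apply_le {A : Matrix n n 𝕜} (hA : A.PosSemidef) {C : ℝ}
    (hC : ∀ k, RCLike.re (A k k) ≤ C) (i j : n) : ‖A i j‖ ≤ C := by
  have h0 : ∀ k, 0 ≤ RCLike.re (A k k) := fun k => (RCLike.nonneg_iff.mp hA.diag_nonneg).1
  have hsq : ‖A i j‖ ^ 2 ≤ C ^ 2 :=
    (hA.norm_sq_apply_le i j).trans (by nlinarith [hC i, hC j, h0 i, h0 j])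
  exact (abs_le_of_sq_le_sq' hsq ((h0 i).trans (hC i))).2

end Matrix

theorem IsPrimitiveRoot.sum_range_zpow_mul {K : Type*} [Field K] {ζ : K} {N : ℕ}
    (hζ : IsPrimitiveRoot ζ N) {l : ℤ} (hl : l.natAbs < N) :
    ∑ t ∈ Finset.range N, ζ ^ (l * t) = if l = 0 then (N : K) else 0 := by
  split_ifs with h
  · simp [h]
  have hne : ζ ^ l ≠ 1 := by
    rw [Ne, hζ.zpow_eq_one_iff_dvd]
    refine fun hd => h (Int.eq_zero_of_abs_lt_dvd hd ?_)
    rw [Int.abs_eq_natAbs]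
    exact_mod_cast hl
  simp_rw [_root_.zpow_mul, zpow_natCast]
  rw [geom_sum_eq hne, ← zpow_natCast, ← _root_.zpow_mul, mul_comm, _root_.zpow_mul,
    zpow_natCast, hζ.pow_eq_one, _root_.one_zpow, sub_self, zero_div]

section psiOf

variable {n m : ℕ}

theorem psiOf_apply (P : Fin (m + 1) → Matrix (Fin n) (Fin n) ℝ) (θ : ℝ) (i j : Fin n) :
    psiOf n m P θ i j = P 0 i j + ∑ k : Fin m,
      (cexp (-(I * ((k : ℂ) + 1) * θ)) * P k.succ i j +
        cexp (I * ((k : ℂ) + 1) * θ) * P k.succ j i) := by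
  simp [psiOf, Matrix.sum_apply]

theorem norm_psiOf_apply_le (P : Fin (m + 1) → Matrix (Fin n) (Fin n) ℝ) (θ : ℝ)
    (i j : Fin n) :
    ‖psiOf n m P θ i j‖ ≤ |P 0 i j| + ∑ k : Fin m, (|P k.succ i j| + |P k.succ j i|) := by
  have hexp : ∀ k : Fin m, ‖cexp (I * ((k : ℂ) + 1) * θ)‖ = 1 := fun k => by
    rw [Complex.norm_exp]; simp
  have hexp' : ∀ k : Fin m, ‖cexp (-(I * ((k : ℂ) + 1) * θ))‖ = 1 := fun k => by
    rw [Complex.norm_exp]; simp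
  rw [psiOf_apply]
  refine (norm_add_le _ _).trans (add_le_add (by simp) ((norm_sum_le _ _).trans ?_))
  refine Finset.sum_le_sum fun k _ => (norm_add_le _ _).trans ?_
  simp [hexp, hexp']

theorem exists_forall_re_psiOf_apply_self_le (P : Fin (m + 1) → Matrix (Fin n) (Fin n) ℝ) :
    ∃ C, ∀ θ i, (psiOf n m P θ i i).re ≤ C := by
  set B : Fin n → ℝ := fun a => |P 0 a a| + ∑ k : Fin m, (|P k.succ a a| + |P k.succ a a|)
  refine ⟨∑ a, B a, fun θ i => (re_le_norm _).trans ?_⟩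
  refine (norm_psiOf_apply_le P θ i i).trans ?_
  exact Finset.single_le_sum (f := B) (fun a _ => by positivity) (Finset.mem_univ i)

theorem psiOf_apply_sample (P : Fin (m + 1) → Matrix (Fin n) (Fin n) ℝ) (N t : ℕ)
    (i j : Fin n) :
    psiOf n m P (2 * π * t / N) i j = P 0 i j + ∑ k : Fin m,
      (cexp (2 * π * I / N) ^ (-(k + 1 : ℤ) * t) * P k.succ i j +
        cexp (2 * π * I / N) ^ ((k + 1 : ℤ) * t) * P k.succ j i) := by
  simp_rw [psiOf_apply, ← Complex.exp_int_mul]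
  congr! 5 <;> push_cast <;> ring

theorem sum_zpow_mul_psiOf_sample {N : ℕ} (hN : 2 * m < N)
    (P : Fin (m + 1) → Matrix (Fin n) (Fin n) ℝ) (i j : Fin n) (k : Fin (m + 1)) :
    ∑ t ∈ Finset.range N,
        cexp (2 * π * I / N) ^ ((k : ℤ) * t) * psiOf n m P (2 * π * t / N) i j
      = N * P k i j := by
  have hζ := Complex.isPrimitiveRoot_exp N (by omega)
  -- the frequencies `-m, …, m` are distinct modulo `N` because `N > 2m`
  simp_rw [psiOf_apply_sample, mul_add, Finset.mul_sum, mul_add, ← mul_assoc,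
    ← zpow_add₀ (hζ.ne_zero (by omega)), ← add_mul]
  rw [Finset.sum_add_distrib, Finset.sum_comm]
  simp_rw [Finset.sum_add_distrib, ← Finset.sum_mul]
  simp (disch := omega) only [hζ.sum_range_zpow_mul]
  cases k using Fin.cases with
  | zero => simp (disch := omega)
  | succ k =>
    rw [Finset.sum_eq_single k (fun x _ hx => by simp (disch := omega)) (by simp)]
    simp (disch := omega)

theorem abs_apply_le_of_forall_norm_psiOf_apply_le
    {P : Fin (m + 1) → Matrix (Fin n) (Fin n) ℝ} {i j : Fin n} {C : ℝ}
    (hC : ∀ θ, ‖psiOf n m P θ i j‖ ≤ C) (k : Fin (m + 1)) : |P k i j| ≤ C := by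
  set N := 2 * m + 1
  have hζ := Complex.isPrimitiveRoot_exp N (by omega)
  refine le_of_mul_le_mul_left ?_ (by positivity : (0 : ℝ) < N)
  calc (N : ℝ) * |P k i j| = ‖(N : ℂ) * P k i j‖ := by simp
    _ = ‖∑ t ∈ Finset.range N,
          cexp (2 * π * I / N) ^ ((k : ℤ) * t) * psiOf n m P (2 * π * t / N) i j‖ := by
        rw [sum_zpow_mul_psiOf_sample (by omega)]
    _ ≤ ∑ t ∈ Finset.range N, C := by
        refine (norm_sum_le _ _).trans (Finset.sum_le_sum fun t _ => ?_)
        rw [norm_mul, norm_zpow, hζ.norm'_eq_one (by omega), _root_.one_zpow, one_mul]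
        exact hC _
    _ = N * C := by simp

theorem continuous_psiOf (θ : ℝ) :
    Continuous fun P : Fin (m + 1) → Matrix (Fin n) (Fin n) ℝ => psiOf n m P θ := by
  unfold psiOf
  fun_prop

end psiOf

theorem isCompact_feasible_coefficients_general
    (n m : ℕ)
    (Ψx : ℝ → Matrix (Fin n) (Fin n) ℂ)
    (hΨx : memQ n m Ψx) :
    IsCompact {P : Fin (m + 1) → Matrix (Fin n) (Fin n) ℝ | (P 0).IsSymm ∧
      ∀ θ : ℝ, (psiOf n m P θ).PosSemidef ∧ (Ψx θ - psiOf n m P θ).PosSemidef ∧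
        (Ψx θ - psiOf n m P θ).IsDiag} := by
  obtain ⟨Q, -, hQ⟩ := hΨx
  obtain ⟨C, hC⟩ := exists_forall_re_psiOf_apply_self_le Q
  have hclosed : IsClosed {P : Fin (m + 1) → Matrix (Fin n) (Fin n) ℝ | (P 0).IsSymm ∧
      ∀ θ : ℝ, (psiOf n m P θ).PosSemidef ∧ (Ψx θ - psiOf n m P θ).PosSemidef ∧
        (Ψx θ - psiOf n m P θ).IsDiag} := by
    simp_rw [Set.ofPred_and, Set.ofPred_forall]
    refine (isClosed_eq (continuous_apply 0).matrix_transpose (continuous_apply 0)).inter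
      (isClosed_iInter fun θ => ?_)
    have hdiff : Continuous fun P => Ψx θ - psiOf n m P θ :=
      continuous_const.sub (continuous_psiOf θ)
    exact (isClosed_setOf_posSemidef.preimage (continuous_psiOf θ)).inter
      ((isClosed_setOf_posSemidef.preimage hdiff).inter (isClosed_setOf_isDiag.preimage hdiff))
  refine (isCompact_univ_pi fun _ => isCompact_univ_pi fun _ => isCompact_univ_pi fun _ =>
    isCompact_Icc (a := -C) (b := C)).of_isClosed_subset hclosed ?_
  rintro P ⟨-, hP⟩ k - i - j -
  refine abs_le.mp (abs_apply_le_of_forall_norm_psiOf_apply_le (fun θ => ?_) k)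
  exact (hP θ).1.norm_apply_le
    (fun a => (re_apply_le_of_posSemidef_sub (hP θ).2.1 a).trans (hQ θ ▸ hC θ a)) i j

/-- The set of coefficient tuples whose associated pseudo-polynomial
`Ψ` satisfies `Ψ(θ) ⪰ 0`, `Ψ_x(θ) − Ψ(θ) ⪰ 0` and `Ψ_x(θ) − Ψ(θ)` diagonal for all `θ`
is a compact subset of `(Matrix (Fin n) (Fin n) ℝ)^{m+1}`. -/
theorem isCompact_feasible_coefficients
    (n m : ℕ) (hn : 0 < n) (hm : 0 < m)
    (Ψx : ℝ → Matrix (Fin n) (Fin n) ℂ)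
    (hΨx : memQ n m Ψx) (hpsd : ∀ θ : ℝ, (Ψx θ).PosSemidef) :
    IsCompact {P : Fin (m + 1) → Matrix (Fin n) (Fin n) ℝ | (P 0).IsSymm ∧
      ∀ θ : ℝ, (psiOf n m P θ).PosSemidef ∧ (Ψx θ - psiOf n m P θ).PosSemidef ∧
        (Ψx θ - psiOf n m P θ).IsDiag} :=
  isCompact_feasible_coefficients_general n m Ψx hΨx
end

section
/- Let Ψ_x ∈ Q(n,m) with coefficient matrices R_0,…,R_m, and let Ψ ∈ Q(n,m) with coefficient matrices Q_0,…,Q_m. If for every θ ∈ ℝ both Ψ(θ) and Ψ_x(θ) − Ψ(θ) are positive semidefinite, then for each k = 0, 1, …, m the operator norm of Q_k (as a complex matrix) is at most the supremum over θ ∈ [-π,π] of the operator norm of Ψ_x(θ). -/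
/-!
The coefficient `Q k` is a Fourier coefficient of `Ψ`: `2π • Q k = ∫_{-π}^{π} e^{ikθ} • Ψ θ dθ`,
an integral in the Banach space of matrices with the ℓ² operator norm. This norm makes the
matrices a C⋆-algebra, in which `0 ≤ a ≤ b` implies `‖a‖ ≤ ‖b‖`. In the Loewner order
`0 ≤ Ψ θ ≤ Ψx θ`, so `‖Ψ θ‖ ≤ ‖Ψx θ‖`, and bounding the integrand by the supremum of `‖Ψx θ‖`
over `[-π, π]` gives the claim.
-/

open Matrix Complex Real
open scoped ComplexOrder

/-- The ℓ²→ℓ² operator norm (largest singular value) of a complex matrix. -/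
noncomputable def l2OpNorm (n : ℕ) (A : Matrix (Fin n) (Fin n) ℂ) : ℝ :=
  ‖Matrix.toEuclideanCLM (𝕜 := ℂ) A‖

section Fourier

variable {E : Type*} [NormedAddCommGroup E] [NormedSpace ℂ E]

theorem integral_exp_int_mul_I (c : ℤ) :
    ∫ θ in -π..π, Complex.exp (I * c * θ) = if c = 0 then (2 * π : ℂ) else 0 := by
  split_ifs with hc
  · simp only [hc, Int.cast_zero, mul_zero, zero_mul, Complex.exp_zero,
      intervalIntegral.integral_const, real_smul, mul_one]
    push_cast
    ring
  · have hc' : I * c ≠ 0 := by simp [I_ne_zero, hc]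
    have hper : Complex.exp (I * c * π) = Complex.exp (I * c * (-π : ℝ)) := by
      rw [← exp_periodic.int_mul c ((I * c * (-π : ℝ)))]
      push_cast; ring_nf
    rw [integral_exp_mul_complex hc', hper, sub_self, zero_div]

theorem integral_exp_int_mul_I_smul [CompleteSpace E] (c : ℤ) (x : E) :
    ∫ θ in -π..π, Complex.exp (I * c * θ) • x = if c = 0 then (2 * π : ℂ) • x else 0 := by
  rw [intervalIntegral.integral_smul_const, integral_exp_int_mul_I, ite_smul, zero_smul]

variable {m : ℕ}

noncomputable def trigPoly (a : Fin (m + 1) → E) (b : Fin m → E) (θ : ℝ) : E :=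
  a 0 + ∑ k : Fin m,
    (Complex.exp (-(I * ((k.1 : ℂ) + 1) * θ)) • a k.succ +
      Complex.exp (I * ((k.1 : ℂ) + 1) * θ) • b k)

theorem continuous_trigPoly (a : Fin (m + 1) → E) (b : Fin m → E) :
    Continuous (trigPoly a b) := by
  unfold trigPoly; fun_prop

theorem exp_smul_trigPoly (a : Fin (m + 1) → E) (b : Fin m → E) (j : Fin (m + 1)) (θ : ℝ) :
    Complex.exp (I * j.1 * θ) • trigPoly a b θ =
      Complex.exp (I * (j.1 : ℤ) * θ) • a 0 +
        ∑ k : Fin m,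
          (Complex.exp (I * ((j.1 - (k.1 + 1) : ℤ)) * θ) • a k.succ +
            Complex.exp (I * ((j.1 + (k.1 + 1) : ℤ)) * θ) • b k) := by
  rw [trigPoly, smul_add, Finset.smul_sum]
  congr 1
  refine Finset.sum_congr rfl fun k _ => ?_
  rw [smul_add, smul_smul, smul_smul, ← Complex.exp_add, ← Complex.exp_add]
  congr 3 <;> push_cast <;> ring

theorem integral_exp_smul_trigPoly [CompleteSpace E] (a : Fin (m + 1) → E) (b : Fin m → E)
    (j : Fin (m + 1)) :
    ∫ θ in -π..π, Complex.exp (I * j.1 * θ) • trigPoly a b θ = (2 * π : ℂ) • a j := by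
  simp_rw [exp_smul_trigPoly]
  have hint {f : ℝ → E} (hf : Continuous f) : IntervalIntegrable f MeasureTheory.volume (-π) π :=
    hf.intervalIntegrable _ _
  rw [intervalIntegral.integral_add (hint (by fun_prop)) (hint (by fun_prop)),
    intervalIntegral.integral_finsetSum fun _ _ => hint (by fun_prop)]
  have hpair (c d : ℤ) (x y : E) :
      ∫ θ in -π..π, (Complex.exp (I * c * θ) • x + Complex.exp (I * d * θ) • y) =
        (if c = 0 then (2 * π : ℂ) • x else 0) + (if d = 0 then (2 * π : ℂ) • y else 0) := by
    rw [intervalIntegral.integral_add (hint (by fun_prop)) (hint (by fun_prop)),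
      integral_exp_int_mul_I_smul, integral_exp_int_mul_I_smul]
  simp only [hpair, integral_exp_int_mul_I_smul]
  have hzero : ((j.1 : ℤ) = 0) ↔ 0 = j := by rw [Fin.ext_iff, Fin.val_zero]; omega
  have hsub (k : Fin m) : (j.1 : ℤ) - (k.1 + 1) = 0 ↔ k.succ = j := by
    rw [Fin.ext_iff, Fin.val_succ]; omega
  have hadd (k : Fin m) : (j.1 : ℤ) + (k.1 + 1) ≠ 0 := by omega
  simp only [hzero, hsub, hadd, if_false, add_zero]
  calc _ = ∑ i : Fin (m + 1), if i = j then (2 * π : ℂ) • a i else 0 :=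
        (Fin.sum_univ_succ _).symm
    _ = _ := by rw [Finset.sum_ite_eq', if_pos (Finset.mem_univ j)]

end Fourier

theorem le_biSup_of_bddAbove_image {α β : Type*} [ConditionallyCompleteLattice α] {f : β → α}
    {s : Set β} (H : BddAbove (f '' s)) {c : β} (hc : c ∈ s) : f c ≤ ⨆ i ∈ s, f i :=
  le_ciSup₂ (f := fun i (_ : i ∈ s) => f i)
    (H.mono <| Set.iUnion_subset fun _ => Set.range_subset_iff.mpr (Set.mem_image_of_mem f ·)) c hc

open scoped Matrix.Norms.L2Operator MatrixOrder

theorem psiOf_eq_trigPoly (n m : ℕ) (Q : Fin (m + 1) → Matrix (Fin n) (Fin n) ℝ) :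
    psiOf n m Q = trigPoly (fun k => (Q k).map ofReal) (fun k => (Q k.succ)ᵀ.map ofReal) :=
  rfl

theorem l2OpNorm_eq_norm {n : ℕ} (A : Matrix (Fin n) (Fin n) ℂ) : l2OpNorm n A = ‖A‖ :=
  rfl

theorem coefficient_opNorm_bound_general
    (n m : ℕ)
    (R Q : Fin (m + 1) → Matrix (Fin n) (Fin n) ℝ)
    (Ψx Ψ : ℝ → Matrix (Fin n) (Fin n) ℂ)
    (hΨx : ∀ θ : ℝ, Ψx θ = psiOf n m R θ)
    (hΨ : ∀ θ : ℝ, Ψ θ = psiOf n m Q θ)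
    (hpsd : ∀ θ : ℝ, (Ψ θ).PosSemidef ∧ (Ψx θ - Ψ θ).PosSemidef) :
    ∀ k : Fin (m + 1),
      l2OpNorm n ((Q k).map Complex.ofReal) ≤
        ⨆ θ ∈ Set.Icc (-Real.pi) Real.pi, l2OpNorm n (Ψx θ) := by
  intro j
  set M := ⨆ θ ∈ Set.Icc (-π) π, l2OpNorm n (Ψx θ)
  have hΨx_cont : Continuous fun θ => l2OpNorm n (Ψx θ) := by
    simpa only [funext hΨx, psiOf_eq_trigPoly, l2OpNorm_eq_norm] using
      (continuous_trigPoly _ _).norm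
  have hΨ_le {θ : ℝ} (hθ : θ ∈ Set.Icc (-π) π) : ‖Ψ θ‖ ≤ M := calc
    ‖Ψ θ‖ ≤ ‖Ψx θ‖ := CStarAlgebra.norm_le_norm_of_nonneg_of_le (hpsd θ).1.nonneg (hpsd θ).2
    _ ≤ M := le_biSup_of_bddAbove_image (isCompact_Icc.bddAbove_image hΨx_cont.continuousOn) hθ
  have hcoeff :
      ∫ θ in -π..π, Complex.exp (I * j.1 * θ) • Ψ θ = (2 * π : ℂ) • (Q j).map ofReal := by
    simp only [hΨ, psiOf_eq_trigPoly]
    exact integral_exp_smul_trigPoly _ _ j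
  have hint : ‖∫ θ in -π..π, Complex.exp (I * j.1 * θ) • Ψ θ‖ ≤ M * |π - -π| := by
    refine intervalIntegral.norm_integral_le_of_norm_le_const fun θ hθ => ?_
    have hre : (I * j.1 * θ : ℂ).re = 0 := by simp
    rw [norm_smul, Complex.norm_exp, hre, Real.exp_zero, one_mul]
    exact hΨ_le (Set.Ioc_subset_Icc_self (Set.uIoc_of_le (neg_le_self pi_pos.le) ▸ hθ))
  have h2π : ‖(2 * π : ℂ)‖ = 2 * π := by simp [abs_of_pos pi_pos]
  have hlen : |π - -π| = 2 * π := by rw [sub_neg_eq_add, ← two_mul, abs_of_pos (by positivity)]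
  rw [hcoeff, norm_smul, h2π, hlen, mul_comm M] at hint
  exact le_of_mul_le_mul_left hint (by positivity)

/-- If `Ψ` and `Ψ_x − Ψ` are positive semidefinite on the unit
circle, then every coefficient of `Ψ` is bounded in operator norm by the supremum of
the operator norm of `Ψ_x` over the circle. -/
theorem coefficient_opNorm_bound
    (n m : ℕ) (hn : 0 < n) (hm : 0 < m)
    (R Q : Fin (m + 1) → Matrix (Fin n) (Fin n) ℝ)
    (hR0 : (R 0).IsSymm) (hQ0 : (Q 0).IsSymm)
    (Ψx Ψ : ℝ → Matrix (Fin n) (Fin n) ℂ)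
    (hΨx : ∀ θ : ℝ, Ψx θ = psiOf n m R θ)
    (hΨ : ∀ θ : ℝ, Ψ θ = psiOf n m Q θ)
    (hpsd : ∀ θ : ℝ, (Ψ θ).PosSemidef ∧ (Ψx θ - Ψ θ).PosSemidef) :
    ∀ k : Fin (m + 1),
      l2OpNorm n ((Q k).map Complex.ofReal) ≤
        ⨆ θ ∈ Set.Icc (-Real.pi) Real.pi, l2OpNorm n (Ψx θ) :=
  coefficient_opNorm_bound_general n m R Q Ψx Ψ hΨx hΨ hpsd
end
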